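/- arXiv:0901.1904 — 3 statements merged into one kernel-verified Lean document; each statement's English description precedes it below -/
import Mathlib

section
/- Let Z₁,…,Z_n be n blocks of length k extracted from a stationary process with process distribution P, with consecutive blocks separated by gaps of l symbols. Let Q⁽ⁿ⁾ be the joint distribution of (Z₁,…,Z_n) and Q̃⁽ⁿ⁾ be the product of n copies of the common marginal Pᵏ. Then the variational distance satisfies d(Q⁽ⁿ⁾, Q̃⁽ⁿ⁾) ≤ (n−1) β_P(l), where β_P(l) is the l-th order β-mixing coefficient of P. -/
/-
Induction on the number of blocks. Splitting off the first block, the triangle inequality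
compares `Q⁽ⁿ⁺¹⁾` first with `Pᵏ ⊗ Q⁽ⁿ⁾` and then with `Pᵏ ⊗ Q̃⁽ⁿ⁾`. After a shift, which by
stationarity does not change any law, the first block depends only on the past `X⁰₋∞` and the
remaining blocks only on the future `X^∞_l`, so the first comparison costs at most `β_P(l)`; the
second costs at most the inductive bound `(n - 1) β_P(l)`, because taking a product with a
probability measure does not increase distances.

The β-coefficient only sees rectangle partitions of past × future. Finite unions of cells of
rectangle grids form an algebra generating the product σ-algebra, so they approximate every
measurable set, and the bound for rectangles extends to arbitrary measurable sets.
-/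

open MeasureTheory
open scoped ENNReal NNReal

/-- Variational distance: supremum over finite measurable partitions of
`∑ i |P(Aᵢ) - Q(Aᵢ)|`. -/
noncomputable def varDist {Z : Type*} [MeasurableSpace Z] (P Q : Measure Z) : ℝ :=
  sSup {x : ℝ | ∃ (n : ℕ) (A : Fin n → Set Z),
    (∀ i, MeasurableSet (A i)) ∧ Pairwise (Function.onFun Disjoint A) ∧
    (⋃ i, A i) = Set.univ ∧ x = ∑ i, |(P (A i)).toReal - (Q (A i)).toReal|}

/-- σ-algebra of the past `σ(X⁰₋∞)` of a two-sided process. -/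
def pastSigma (X : Type*) [MeasurableSpace X] : MeasurableSpace (ℤ → X) :=
  MeasurableSpace.comap (fun ω (i : {i : ℤ // i ≤ 0}) => ω i) inferInstance

/-- σ-algebra of the far future `σ(X^∞_l)` of a two-sided process. -/
def futureSigma (X : Type*) [MeasurableSpace X] (l : ℕ) : MeasurableSpace (ℤ → X) :=
  MeasurableSpace.comap (fun ω (i : {i : ℤ // (l : ℤ) ≤ i}) => ω i) inferInstance

/-- `l`-th order β-mixing (absolute regularity) coefficient of a process distribution `P`:
the supremum over finite past-measurable partitions `{Aᵢ}` and finite future-measurable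
partitions `{Bⱼ}` of `∑ᵢ∑ⱼ |P(Aᵢ ∩ Bⱼ) − P(Aᵢ)P(Bⱼ)|`. -/
noncomputable def betaMix {X : Type*} [MeasurableSpace X]
    (P : Measure (ℤ → X)) (l : ℕ) : ℝ :=
  sSup {r : ℝ | ∃ (nA nB : ℕ) (A : Fin nA → Set (ℤ → X)) (B : Fin nB → Set (ℤ → X)),
    (∀ i, MeasurableSet[pastSigma X] (A i)) ∧ Pairwise (Function.onFun Disjoint A) ∧
    (⋃ i, A i) = Set.univ ∧
    (∀ j, MeasurableSet[futureSigma X l] (B j)) ∧ Pairwise (Function.onFun Disjoint B) ∧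
    (⋃ j, B j) = Set.univ ∧
    r = ∑ i, ∑ j, |(P (A i ∩ B j)).toReal - (P (A i)).toReal * (P (B j)).toReal|}

/-- Extraction of `n` blocks of length `k` separated by gaps of length `l`. -/
def blocks {X : Type*} (n k l : ℕ) : (ℤ → X) → (Fin n → Fin k → X) :=
  fun ω j i => ω ((j : ℤ) * ((k : ℤ) + (l : ℤ)) + (i : ℤ))

open Set Function
open scoped symmDiff

namespace Blocking

structure IsMeasurablePartition {Z ι : Type*} [mZ : MeasurableSpace Z] (C : ι → Set Z) : Prop where
  measurableSet : ∀ i, MeasurableSet (C i)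
  pairwise_disjoint : Pairwise (Disjoint on C)
  iUnion_eq_univ : ⋃ i, C i = univ

variable {Z : Type*} [MeasurableSpace Z]

/-- For probability measures this is equivalent to `varDist μ ν ≤ c` (the partition `{S, Sᶜ}`
contributes `2 |μ S - ν S|`), but unlike the partition form it passes directly through maps,
products and the triangle inequality. -/
def VarDistLE (μ ν : Measure Z) (c : ℝ) : Prop :=
  ∀ S, MeasurableSet S → 2 * |μ.real S - ν.real S| ≤ c

namespace VarDistLE

variable {μ ν ρ : Measure Z} {a b c : ℝ}

lemma of_eq (h : μ = ν) (hc : 0 ≤ c) : VarDistLE μ ν c := fun S _ => by simpa [h] using hc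

lemma trans (h₁ : VarDistLE μ ν a) (h₂ : VarDistLE ν ρ b) : VarDistLE μ ρ (a + b) :=
  fun S hS => by
    have := abs_sub_le (μ.real S) (ν.real S) (ρ.real S)
    linarith [h₁ S hS, h₂ S hS]

lemma map {Z' : Type*} [MeasurableSpace Z'] (h : VarDistLE μ ν c) {f : Z → Z'}
    (hf : Measurable f) : VarDistLE (μ.map f) (ν.map f) c := fun S hS => by
  simpa only [map_measureReal_apply hf hS] using h _ (hf hS)

lemma prod_left {Y : Type*} [MeasurableSpace Y] (ρ : Measure Y) [IsProbabilityMeasure ρ]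
    [IsFiniteMeasure μ] [IsFiniteMeasure ν] (h : VarDistLE μ ν c) :
    VarDistLE (ρ.prod μ) (ρ.prod ν) c := by
  intro S hS
  have hreal : ∀ (κ : Measure Z) [IsFiniteMeasure κ],
      (ρ.prod κ).real S = ∫ v, κ.real (Prod.mk v ⁻¹' S) ∂ρ := fun κ _ => by
    rw [measureReal_def, Measure.prod_apply hS, ← integral_toReal
      (measurable_measure_prodMk_left hS).aemeasurable (ae_of_all _ fun v => measure_lt_top _ _)]
    rfl
  have hint : ∀ (κ : Measure Z) [IsFiniteMeasure κ],
      Integrable (fun v => κ.real (Prod.mk v ⁻¹' S)) ρ := fun κ _ =>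
    Measure.integrable_measure_prodMk_left hS (measure_ne_top _ _)
  have hsec : ∀ v, ‖μ.real (Prod.mk v ⁻¹' S) - ν.real (Prod.mk v ⁻¹' S)‖ ≤ c / 2 := fun v => by
    rw [Real.norm_eq_abs, le_div_iff₀' two_pos]
    exact h _ (measurable_prodMk_left hS)
  rw [hreal, hreal, ← integral_sub (hint μ) (hint ν)]
  calc 2 * |∫ v, (μ.real (Prod.mk v ⁻¹' S) - ν.real (Prod.mk v ⁻¹' S)) ∂ρ|
      ≤ 2 * (c / 2 * ρ.real univ) := by
        gcongr; exact norm_integral_le_of_norm_le_const (ae_of_all _ hsec)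
    _ = c := by rw [probReal_univ]; ring

end VarDistLE

namespace IsMeasurablePartition

variable {ι κ : Type*} {C : ι → Set Z}

lemma sum_measureReal_eq_one [Fintype ι] (hC : IsMeasurablePartition C) (μ : Measure Z)
    [IsProbabilityMeasure μ] : ∑ i, μ.real (C i) = 1 := by
  rw [← measureReal_iUnion_fintype hC.pairwise_disjoint hC.measurableSet, hC.iUnion_eq_univ,
    probReal_univ]

lemma measureReal_biUnion (hC : IsMeasurablePartition C) (μ : Measure Z) [IsFiniteMeasure μ]
    (s : Finset ι) : μ.real (⋃ i ∈ s, C i) = ∑ i ∈ s, μ.real (C i) :=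
  measureReal_biUnion_finset (hC.pairwise_disjoint.set_pairwise _)
    (fun i _ => hC.measurableSet i)

lemma const_univ [Unique ι] : IsMeasurablePartition fun _ : ι => (univ : Set Z) :=
  ⟨fun _ => .univ, Subsingleton.pairwise, iUnion_const _⟩

lemma pair_compl {A : Set Z} (hA : MeasurableSet A) : IsMeasurablePartition ![A, Aᶜ] := by
  refine ⟨fun i => ?_, fun i j hij => ?_, ?_⟩
  · fin_cases i
    exacts [hA, hA.compl]
  · fin_cases i <;> fin_cases j <;> simp_all [onFun, disjoint_compl_right, disjoint_compl_left]
  · ext x; simp [Fin.exists_fin_two, em]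

lemma inter {D : κ → Set Z} (hC : IsMeasurablePartition C) (hD : IsMeasurablePartition D) :
    IsMeasurablePartition fun p : ι × κ => C p.1 ∩ D p.2 := by
  refine ⟨fun p => (hC.measurableSet _).inter (hD.measurableSet _), fun p q hpq => ?_, ?_⟩
  · rcases Prod.ext_iff.not.1 hpq |> not_and_or.1 with h | h
    · exact (hC.pairwise_disjoint h).mono inter_subset_left inter_subset_left
    · exact (hD.pairwise_disjoint h).mono inter_subset_right inter_subset_right
  · rw [iUnion_prod', ← iUnion_inter_iUnion, hC.iUnion_eq_univ, hD.iUnion_eq_univ, univ_inter]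

lemma comp_equiv (hC : IsMeasurablePartition C) (e : κ ≃ ι) : IsMeasurablePartition (C ∘ e) :=
  ⟨fun _ => hC.measurableSet _, fun _ _ h => hC.pairwise_disjoint (e.injective.ne h),
    hC.iUnion_eq_univ ▸ e.surjective.iUnion_comp C⟩

lemma prod {Y : Type*} [MeasurableSpace Y] {D : κ → Set Y} (hC : IsMeasurablePartition C)
    (hD : IsMeasurablePartition D) : IsMeasurablePartition fun p : ι × κ => C p.1 ×ˢ D p.2 := by
  refine ⟨fun p => (hC.measurableSet _).prod (hD.measurableSet _), fun p q hpq => ?_, ?_⟩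
  · rcases Prod.ext_iff.not.1 hpq |> not_and_or.1 with h | h
    · exact (hC.pairwise_disjoint h).set_prod_left _ _
    · exact (hD.pairwise_disjoint h).set_prod_right _ _
  · rw [iUnion_prod, hC.iUnion_eq_univ, hD.iUnion_eq_univ, univ_prod_univ]

lemma exists_finset_eq_biUnion [Finite ι] (hC : IsMeasurablePartition C) {U : Set Z}
    (hU : ∀ i, C i ⊆ U ∨ Disjoint (C i) U) : ∃ s : Finset ι, U = ⋃ i ∈ s, C i := by
  classical
  have := Fintype.ofFinite ι
  refine ⟨Finset.univ.filter fun i => C i ⊆ U, Subset.antisymm (fun x hx => ?_)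
    (iUnion₂_subset fun i hi => (Finset.mem_filter.1 hi).2)⟩
  obtain ⟨i, hi⟩ := mem_iUnion.1 (hC.iUnion_eq_univ ▸ mem_univ x)
  have hCU : C i ⊆ U := (hU i).resolve_right (Set.not_disjoint_iff.2 ⟨x, hi, hx⟩)
  exact mem_biUnion (Finset.mem_filter.2 ⟨Finset.mem_univ _, hCU⟩) hi

lemma preimage {Ω : Type*} {mΩ : MeasurableSpace Ω} {f : Ω → Z} (hf : Measurable f)
    (hC : IsMeasurablePartition C) : IsMeasurablePartition fun i => f ⁻¹' C i :=
  ⟨fun i => hf (hC.measurableSet i), fun _ _ h => (hC.pairwise_disjoint h).preimage f,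
    by rw [← preimage_iUnion, hC.iUnion_eq_univ, preimage_univ]⟩

lemma two_mul_measureReal_sub [Fintype ι] [DecidableEq ι] (hC : IsMeasurablePartition C)
    (μ ν : Measure Z) [IsProbabilityMeasure μ] [IsProbabilityMeasure ν] (s : Finset ι) :
    2 * (μ.real (⋃ i ∈ s, C i) - ν.real (⋃ i ∈ s, C i))
      = ∑ i ∈ s, (μ.real (C i) - ν.real (C i)) - ∑ i ∈ sᶜ, (μ.real (C i) - ν.real (C i)) := by
  have htot : ∑ i, (μ.real (C i) - ν.real (C i)) = 0 := by
    rw [Finset.sum_sub_distrib, hC.sum_measureReal_eq_one, hC.sum_measureReal_eq_one, sub_self]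
  rw [← Finset.sum_add_sum_compl s] at htot
  rw [hC.measureReal_biUnion, hC.measureReal_biUnion, ← Finset.sum_sub_distrib]
  linarith

lemma sum_abs_sub_le [Fintype ι] (hC : IsMeasurablePartition C) {μ ν : Measure Z}
    [IsProbabilityMeasure μ] [IsProbabilityMeasure ν] {c : ℝ} (h : VarDistLE μ ν c) :
    ∑ i, |μ.real (C i) - ν.real (C i)| ≤ c := by
  classical
  set s := Finset.univ.filter fun i => ν.real (C i) ≤ μ.real (C i)
  have hsplit : ∑ i, |μ.real (C i) - ν.real (C i)|
      = ∑ i ∈ s, (μ.real (C i) - ν.real (C i)) - ∑ i ∈ sᶜ, (μ.real (C i) - ν.real (C i)) := by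
    rw [← Finset.sum_add_sum_compl s, sub_eq_add_neg, ← Finset.sum_neg_distrib]
    congr 1 <;> refine Finset.sum_congr rfl fun i hi => ?_
    · exact abs_of_nonneg (sub_nonneg.2 (Finset.mem_filter.1 hi).2)
    · simp only [s, Finset.mem_compl, Finset.mem_filter, Finset.mem_univ, true_and, not_le] at hi
      exact abs_of_neg (sub_neg.2 hi)
  rw [hsplit, ← hC.two_mul_measureReal_sub]
  exact (mul_le_mul_of_nonneg_left (le_abs_self _) zero_le_two).trans
    (h _ (Finset.measurableSet_biUnion _ fun i _ => hC.measurableSet i))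

lemma two_mul_abs_sub_le_sum [Fintype ι] (hC : IsMeasurablePartition C) (μ ν : Measure Z)
    [IsProbabilityMeasure μ] [IsProbabilityMeasure ν] {U : Set Z}
    (hU : ∀ i, C i ⊆ U ∨ Disjoint (C i) U) :
    2 * |μ.real U - ν.real U| ≤ ∑ i, |μ.real (C i) - ν.real (C i)| := by
  classical
  obtain ⟨s, rfl⟩ := hC.exists_finset_eq_biUnion hU
  rw [← abs_two, ← abs_mul, hC.two_mul_measureReal_sub, ← Finset.sum_add_sum_compl s]
  refine (abs_sub _ _).trans (add_le_add ?_ ?_) <;> exact Finset.abs_sum_le_sum_abs _ _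

end IsMeasurablePartition

lemma varDist_le_of_varDistLE {μ ν : Measure Z} [IsProbabilityMeasure μ]
    [IsProbabilityMeasure ν] {c : ℝ} (h : VarDistLE μ ν c) (hc : 0 ≤ c) : varDist μ ν ≤ c := by
  refine Real.sSup_le ?_ hc
  rintro _ ⟨n, C, hmeas, hdisj, hcov, rfl⟩
  exact IsMeasurablePartition.sum_abs_sub_le ⟨hmeas, hdisj, hcov⟩ h

section Grid

variable {Y₁ Y₂ : Type*} [MeasurableSpace Y₁] [MeasurableSpace Y₂]

def gridSets (Y₁ Y₂ : Type*) [MeasurableSpace Y₁] [MeasurableSpace Y₂] : Set (Set (Y₁ × Y₂)) :=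
  {U | ∃ (m n : ℕ) (α : Fin m → Set Y₁) (β : Fin n → Set Y₂),
    IsMeasurablePartition α ∧ IsMeasurablePartition β ∧
      ∀ p : Fin m × Fin n, α p.1 ×ˢ β p.2 ⊆ U ∨ Disjoint (α p.1 ×ˢ β p.2) U}

lemma measurableSet_of_mem_gridSets {U : Set (Y₁ × Y₂)} (hU : U ∈ gridSets Y₁ Y₂) :
    MeasurableSet U := by
  obtain ⟨m, n, α, β, hα, hβ, hαβ⟩ := hU
  obtain ⟨s, rfl⟩ := (hα.prod hβ).exists_finset_eq_biUnion hαβ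
  exact Finset.measurableSet_biUnion _ fun p _ => (hα.prod hβ).measurableSet p

lemma prod_mem_gridSets {A : Set Y₁} {B : Set Y₂} (hA : MeasurableSet A) (hB : MeasurableSet B) :
    A ×ˢ B ∈ gridSets Y₁ Y₂ := by
  refine ⟨2, 2, _, _, .pair_compl hA, .pair_compl hB, fun p => ?_⟩
  fin_cases p <;> simp [disjoint_compl_left, Set.disjoint_prod]

lemma union_mem_gridSets {U V : Set (Y₁ × Y₂)} (hU : U ∈ gridSets Y₁ Y₂)
    (hV : V ∈ gridSets Y₁ Y₂) : U ∪ V ∈ gridSets Y₁ Y₂ := by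
  obtain ⟨m, n, α, β, hα, hβ, hU⟩ := hU
  obtain ⟨m', n', α', β', hα', hβ', hV⟩ := hV
  refine ⟨m * m', n * n', _, _, (hα.inter hα').comp_equiv finProdFinEquiv.symm,
    (hβ.inter hβ').comp_equiv finProdFinEquiv.symm, fun p => ?_⟩
  set i := finProdFinEquiv.symm p.1
  set j := finProdFinEquiv.symm p.2
  have hsubU : (α i.1 ∩ α' i.2) ×ˢ (β j.1 ∩ β' j.2) ⊆ α i.1 ×ˢ β j.1 :=
    prod_mono inter_subset_left inter_subset_left
  have hsubV : (α i.1 ∩ α' i.2) ×ˢ (β j.1 ∩ β' j.2) ⊆ α' i.2 ×ˢ β' j.2 :=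
    prod_mono inter_subset_right inter_subset_right
  have hcellU := (hU (i.1, j.1)).imp hsubU.trans (Disjoint.mono_left hsubU)
  have hcellV := (hV (i.2, j.2)).imp hsubV.trans (Disjoint.mono_left hsubV)
  rcases hcellU with hU | hU
  · exact .inl (hU.trans subset_union_left)
  · exact hcellV.imp (fun hV => hV.trans subset_union_right)
      fun hV => disjoint_union_right.2 ⟨hU, hV⟩

lemma isSetAlgebra_gridSets : IsSetAlgebra (gridSets Y₁ Y₂) where
  empty_mem := ⟨1, 1, _, _, .const_univ, .const_univ, fun _ => .inr (disjoint_empty _)⟩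
  compl_mem := fun _ ⟨m, n, α, β, hα, hβ, hU⟩ => ⟨m, n, α, β, hα, hβ, fun p =>
    (hU p).symm.imp subset_compl_iff_disjoint_right.2 disjoint_compl_right_iff_subset.2⟩
  union_mem := fun _ _ => union_mem_gridSets

lemma generateFrom_gridSets :
    (inferInstance : MeasurableSpace (Y₁ × Y₂)) = .generateFrom (gridSets Y₁ Y₂) := by
  refine le_antisymm ?_ (MeasurableSpace.generateFrom_le fun _ => measurableSet_of_mem_gridSets)
  rw [← generateFrom_prod]
  refine MeasurableSpace.generateFrom_mono ?_
  rintro _ ⟨A, hA, B, hB, rfl⟩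
  exact prod_mem_gridSets hA hB

/-- Grid sets are dense for `J + K`, and on a grid set the setwise bound follows from the
partition sum over the grid. -/
lemma varDistLE_of_rectangle_sum_le (J K : Measure (Y₁ × Y₂)) [IsProbabilityMeasure J]
    [IsProbabilityMeasure K] {c : ℝ}
    (hc : ∀ (m n : ℕ) (α : Fin m → Set Y₁) (β : Fin n → Set Y₂), IsMeasurablePartition α →
      IsMeasurablePartition β → ∑ i, ∑ j, |J.real (α i ×ˢ β j) - K.real (α i ×ˢ β j)| ≤ c) :
    VarDistLE J K c := by
  have hgrid : ∀ U ∈ gridSets Y₁ Y₂, 2 * |J.real U - K.real U| ≤ c := by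
    rintro U ⟨m, n, α, β, hα, hβ, hU⟩
    refine ((hα.prod hβ).two_mul_abs_sub_le_sum J K hU).trans ?_
    rw [Fintype.sum_prod_type]
    exact hc m n α β hα hβ
  have hdense := Measure.MeasureDense.of_generateFrom_isSetAlgebra_finite (J + K)
    isSetAlgebra_gridSets generateFrom_gridSets
  intro S hS
  refine le_of_forall_pos_lt_add fun ε hε => ?_
  obtain ⟨U, hU, hSU⟩ := hdense.approx S hS (measure_ne_top _ _) (ε / 2) (by positivity)
  replace hSU : J.real (S ∆ U) + K.real (S ∆ U) < ε / 2 := by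
    rw [← measureReal_add_apply]; exact ENNReal.toReal_lt_of_lt_ofReal hSU
  have hJ := abs_measureReal_sub_le_measureReal_symmDiff (μ := J) hS.nullMeasurableSet
    (measurableSet_of_mem_gridSets hU).nullMeasurableSet
  have hK := abs_measureReal_sub_le_measureReal_symmDiff (μ := K) hS.nullMeasurableSet
    (measurableSet_of_mem_gridSets hU).nullMeasurableSet
  have hUS := abs_sub_le (J.real U) (K.real U) (K.real S)
  rw [abs_sub_comm (K.real U)] at hUS
  linarith [hgrid U hU, abs_sub_le (J.real S) (J.real U) (K.real S)]

end Grid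

section Mixing

variable {X : Type*} [MeasurableSpace X]

lemma pastSigma_le : pastSigma X ≤ MeasurableSpace.pi :=
  Measurable.comap_le (by fun_prop)

lemma futureSigma_le (l : ℕ) : futureSigma X l ≤ MeasurableSpace.pi :=
  Measurable.comap_le (by fun_prop)

lemma measurable_pastSigma {Y : Type*} [MeasurableSpace Y] {h : ({i : ℤ // i ≤ 0} → X) → Y}
    (hh : Measurable h) : Measurable[pastSigma X] fun ω => h fun i => ω i :=
  hh.comp (comap_measurable _)

lemma measurable_futureSigma {Y : Type*} [MeasurableSpace Y] {l : ℕ}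
    {h : ({i : ℤ // (l : ℤ) ≤ i} → X) → Y} (hh : Measurable h) :
    Measurable[futureSigma X l] fun ω => h fun i => ω i :=
  hh.comp (comap_measurable _)

variable (P : Measure (ℤ → X)) [IsProbabilityMeasure P] (l : ℕ)

lemma bddAbove_betaMix_set : BddAbove {r : ℝ | ∃ (nA nB : ℕ) (A : Fin nA → Set (ℤ → X))
    (B : Fin nB → Set (ℤ → X)),
    (∀ i, MeasurableSet[pastSigma X] (A i)) ∧ Pairwise (Function.onFun Disjoint A) ∧
    (⋃ i, A i) = Set.univ ∧
    (∀ j, MeasurableSet[futureSigma X l] (B j)) ∧ Pairwise (Function.onFun Disjoint B) ∧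
    (⋃ j, B j) = Set.univ ∧
    r = ∑ i, ∑ j, |(P (A i ∩ B j)).toReal - (P (A i)).toReal * (P (B j)).toReal|} := by
  refine ⟨2, ?_⟩
  rintro _ ⟨nA, nB, A, B, hA, hAd, hAc, hB, hBd, hBc, rfl⟩
  have hA' : IsMeasurablePartition A := ⟨fun i => pastSigma_le _ (hA i), hAd, hAc⟩
  have hB' : IsMeasurablePartition B := ⟨fun j => futureSigma_le l _ (hB j), hBd, hBc⟩
  calc ∑ i, ∑ j, |P.real (A i ∩ B j) - P.real (A i) * P.real (B j)|
      ≤ ∑ i, ∑ j, (P.real (A i ∩ B j) + P.real (A i) * P.real (B j)) := by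
        gcongr with i _ j _
        exact (abs_sub _ _).trans_eq (by rw [abs_of_nonneg measureReal_nonneg,
          abs_of_nonneg (mul_nonneg measureReal_nonneg measureReal_nonneg)])
    _ = 2 := by
        simp only [Finset.sum_add_distrib, ← Finset.sum_mul_sum, hA'.sum_measureReal_eq_one,
          hB'.sum_measureReal_eq_one, ← Fintype.sum_prod_type' fun i j => P.real (A i ∩ B j),
          (hA'.inter hB').sum_measureReal_eq_one]
        norm_num

lemma betaMix_nonneg : 0 ≤ betaMix P l :=
  le_csSup (bddAbove_betaMix_set P l) ⟨1, 1, fun _ => univ, fun _ => univ, fun _ => .univ,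
    Subsingleton.pairwise, iUnion_const _, fun _ => .univ, Subsingleton.pairwise,
    iUnion_const _, by simp⟩

lemma sum_le_betaMix {nA nB : ℕ} {A : Fin nA → Set (ℤ → X)} {B : Fin nB → Set (ℤ → X)}
    (hA : IsMeasurablePartition (mZ := pastSigma X) A)
    (hB : IsMeasurablePartition (mZ := futureSigma X l) B) :
    ∑ i, ∑ j, |P.real (A i ∩ B j) - P.real (A i) * P.real (B j)| ≤ betaMix P l := by
  obtain ⟨hAm, hAd, hAc⟩ := hA
  obtain ⟨hBm, hBd, hBc⟩ := hB
  exact le_csSup (bddAbove_betaMix_set P l) ⟨nA, nB, A, B, hAm, hAd, hAc, hBm, hBd, hBc, rfl⟩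

lemma varDistLE_map_prodMk_betaMix {Y₁ Y₂ : Type*} [MeasurableSpace Y₁] [MeasurableSpace Y₂]
    {g₁ : (ℤ → X) → Y₁} {g₂ : (ℤ → X) → Y₂} (hg₁ : Measurable[pastSigma X] g₁)
    (hg₂ : Measurable[futureSigma X l] g₂) :
    VarDistLE (P.map fun ω => (g₁ ω, g₂ ω)) ((P.map g₁).prod (P.map g₂)) (betaMix P l) := by
  have hg₁' : Measurable g₁ := hg₁.mono pastSigma_le le_rfl
  have hg₂' : Measurable g₂ := hg₂.mono (futureSigma_le l) le_rfl
  have := Measure.isProbabilityMeasure_map (μ := P) hg₁'.aemeasurable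
  have := Measure.isProbabilityMeasure_map (μ := P) hg₂'.aemeasurable
  have := Measure.isProbabilityMeasure_map (μ := P) (hg₁'.prodMk hg₂').aemeasurable
  refine varDistLE_of_rectangle_sum_le _ _ fun m n α β hα hβ => ?_
  refine (sum_le_betaMix P l (hα.preimage hg₁) (hβ.preimage hg₂)).trans_eq' ?_
  simp only [map_measureReal_apply (hg₁'.prodMk hg₂') ((hα.measurableSet _).prod
    (hβ.measurableSet _)), measureReal_prod_prod, map_measureReal_apply hg₁' (hα.measurableSet _),
    map_measureReal_apply hg₂' (hβ.measurableSet _), mk_preimage_prod]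

end Mixing

section Blocks

variable {X : Type*} [MeasurableSpace X]

def shift (m : ℕ) (ω : ℤ → X) : ℤ → X := fun i => ω (i + m)

def firstBlock (k : ℕ) (ω : ℤ → X) : Fin k → X := fun i => ω i

omit [MeasurableSpace X] in
lemma shift_zero : shift (X := X) 0 = id := by
  funext ω i
  simp [shift]

omit [MeasurableSpace X] in
lemma shift_succ (m : ℕ) : shift (X := X) (m + 1) = shift 1 ∘ shift m := by
  funext ω i
  simp only [shift, Function.comp_apply, Nat.cast_add, Nat.cast_one]
  ring_nf

lemma measurable_shift (m : ℕ) : Measurable (shift (X := X) m) := by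
  unfold shift; fun_prop

lemma measurable_firstBlock (k : ℕ) : Measurable (firstBlock (X := X) k) := by
  unfold firstBlock; fun_prop

lemma measurable_blocks (n k l : ℕ) : Measurable (blocks (X := X) n k l) := by
  unfold blocks; fun_prop

variable {P : Measure (ℤ → X)}

lemma measurePreserving_shift (hP : MeasurePreserving (shift 1) P P) (m : ℕ) :
    MeasurePreserving (shift m) P P := by
  induction m with
  | zero => rw [shift_zero]; exact .id P
  | succ m ih => rw [shift_succ]; exact hP.comp ih

lemma map_comp_shift (hP : MeasurePreserving (shift 1) P P) (m : ℕ) {Y : Type*}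
    [MeasurableSpace Y] {f : (ℤ → X) → Y} (hf : Measurable f) : P.map (f ∘ shift m) = P.map f := by
  rw [← Measure.map_map hf (measurable_shift m), (measurePreserving_shift hP m).map_eq]

lemma varDistLE_blocks_one (k l : ℕ) :
    VarDistLE (P.map (blocks 1 k l)) (Measure.pi fun _ : Fin 1 => P.map (firstBlock k)) 0 := by
  refine .of_eq ?_ le_rfl
  set e := MeasurableEquiv.funUnique (Fin 1) (Fin k → X)
  have hblocks : blocks 1 k l = e.symm ∘ firstBlock (X := X) k := by
    funext ω j i
    rw [Subsingleton.elim j 0]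
    simp [e, blocks, firstBlock]
  rw [hblocks, ← Measure.map_map e.symm.measurable (measurable_firstBlock k),
    ((measurePreserving_funUnique _ (Fin 1)).symm e).map_eq]
  rfl

variable [IsProbabilityMeasure P]

/-- Moved to the indices `-k, …, -1`, the first block is past-measurable; the remaining blocks,
moved back by the block length `k`, start at index `l` and are future-measurable. -/
lemma varDistLE_firstBlock_blocks (hP : MeasurePreserving (shift 1) P P) (n k l : ℕ) :
    VarDistLE (P.map fun ω => (firstBlock k ω, blocks n k l (shift (k + l) ω)))
      ((P.map (firstBlock k)).prod (P.map (blocks n k l))) (betaMix P l) := by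
  set g₁ : (ℤ → X) → Fin k → X := fun ω i => ω (i - k)
  set g₂ : (ℤ → X) → Fin n → Fin k → X := fun ω => blocks n k l (shift l ω)
  have hg₁ : Measurable[pastSigma X] g₁ :=
    measurable_pastSigma (h := fun y (i : Fin k) => y ⟨i - k, by omega⟩) (by fun_prop)
  have hg₂ : Measurable[futureSigma X l] g₂ :=
    measurable_futureSigma (h := fun y (j : Fin n) (i : Fin k) => y ⟨j * (k + l) + i + l, by
      have : (0 : ℤ) ≤ j * (k + l) := by positivity
      omega⟩) (by fun_prop)
  have hpair : (fun ω => (firstBlock k ω, blocks n k l (shift (k + l) ω)))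
      = (fun ω => (g₁ ω, g₂ ω)) ∘ shift k := by
    funext ω
    refine Prod.ext (funext fun i => ?_) (funext fun j => funext fun i => ?_)
    · show ω i = ω (i - k + k)
      rw [sub_add_cancel]
    · show ω (j * (k + l) + i + ((k + l : ℕ) : ℤ)) = ω (j * (k + l) + i + l + k)
      congr 1; push_cast; ring
  have hfirst : firstBlock k = g₁ ∘ shift k := by
    funext ω i
    show ω i = ω (i - k + k)
    rw [sub_add_cancel]
  rw [hpair, map_comp_shift hP k (((hg₁.mono pastSigma_le le_rfl).prodMk
    (hg₂.mono (futureSigma_le l) le_rfl))), hfirst, map_comp_shift hP k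
    (hg₁.mono pastSigma_le le_rfl), ← map_comp_shift hP l (measurable_blocks n k l)]
  exact varDistLE_map_prodMk_betaMix P l hg₁ hg₂


lemma varDistLE_blocks_succ (hP : MeasurePreserving (shift 1) P P) {n k l : ℕ} {c : ℝ}
    (h : VarDistLE (P.map (blocks n k l)) (Measure.pi fun _ : Fin n => P.map (firstBlock k)) c) :
    VarDistLE (P.map (blocks (n + 1) k l))
      (Measure.pi fun _ : Fin (n + 1) => P.map (firstBlock k)) (betaMix P l + c) := by
  set ν := P.map (firstBlock (X := X) k)
  have := Measure.isProbabilityMeasure_map (μ := P) (measurable_firstBlock (X := X) k).aemeasurable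
  have := Measure.isProbabilityMeasure_map (μ := P) (measurable_blocks (X := X) n k l).aemeasurable
  set E := MeasurableEquiv.piFinSuccAbove (fun _ : Fin (n + 1) => Fin k → X) 0
  have hQ : (P.map (blocks (n + 1) k l)).map E
      = P.map fun ω => (firstBlock k ω, blocks n k l (shift (k + l) ω)) := by
    rw [Measure.map_map E.measurable (measurable_blocks _ k l)]
    congr 1
    funext ω
    refine Prod.ext (funext fun i => ?_) (funext fun j => funext fun i => ?_)
    · simp [E, blocks, firstBlock]
    · show ω ((j.succ : ℕ) * (k + l) + i) = ω (j * (k + l) + i + (k + l : ℕ))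
      congr 1; push_cast [Fin.val_succ]; ring
  have hQ' : (Measure.pi fun _ => ν).map E = ν.prod (Measure.pi fun _ : Fin n => ν) :=
    (measurePreserving_piFinSuccAbove (fun _ => ν) 0).map_eq
  have key := ((varDistLE_firstBlock_blocks hP n k l).trans (h.prod_left ν)).map
    E.symm.measurable
  rwa [← hQ, ← hQ', MeasurableEquiv.map_symm_map, MeasurableEquiv.map_symm_map] at key

lemma varDistLE_blocks (hP : MeasurePreserving (shift 1) P P) (k l : ℕ) : ∀ n : ℕ,
    VarDistLE (P.map (blocks (n + 1) k l))
      (Measure.pi fun _ : Fin (n + 1) => P.map (firstBlock k)) (n * betaMix P l)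
  | 0 => by simpa using varDistLE_blocks_one k l
  | n + 1 => by
    convert varDistLE_blocks_succ hP (varDistLE_blocks hP k l n) using 1
    push_cast
    ring

end Blocks

end Blocking

theorem blocking_varDist_le_general
    {X : Type*} [MeasurableSpace X]
    (P : Measure (ℤ → X)) [IsProbabilityMeasure P]
    (hstat : ∀ A : Set (ℤ → X), MeasurableSet A →
      P ((fun ω i => ω (i + 1)) ⁻¹' A) = P A)
    (n k l : ℕ) (hn : 1 ≤ n) :
    varDist (P.map (blocks n k l))
        (Measure.pi fun _ : Fin n => P.map (fun ω (i : Fin k) => ω (i : ℤ)))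
      ≤ ((n : ℝ) - 1) * betaMix P l := by
  have hP : MeasurePreserving (Blocking.shift 1) P P :=
    ⟨Blocking.measurable_shift 1, Measure.ext fun A hA => by
      rw [Measure.map_apply (Blocking.measurable_shift 1) hA]
      exact hstat A hA⟩
  have : IsProbabilityMeasure (P.map fun ω (i : Fin k) => ω (i : ℤ)) :=
    Measure.isProbabilityMeasure_map (Blocking.measurable_firstBlock k).aemeasurable
  have := Measure.isProbabilityMeasure_map (μ := P)
    (Blocking.measurable_blocks (X := X) n k l).aemeasurable
  obtain ⟨m, rfl⟩ := Nat.exists_eq_add_of_le' hn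
  rw [Nat.cast_add_one, add_sub_cancel_right]
  exact Blocking.varDist_le_of_varDistLE (Blocking.varDistLE_blocks hP k l m)
    (mul_nonneg m.cast_nonneg (Blocking.betaMix_nonneg P l))

/-- Blocking lemma: for a stationary process `P`, the joint distribution `Q⁽ⁿ⁾` of `n`
blocks of length `k` separated by gaps of length `l` is within variational distance
`(n−1) β_P(l)` of the product `Q̃⁽ⁿ⁾` of `n` copies of the common block marginal `Pᵏ`. -/
theorem blocking_varDist_le
    {X : Type*} [MeasurableSpace X]
    (P : Measure (ℤ → X)) [IsProbabilityMeasure P]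
    (hstat : ∀ A : Set (ℤ → X), MeasurableSet A →
      P ((fun ω i => ω (i + 1)) ⁻¹' A) = P A)
    (n k l : ℕ) (hn : 1 ≤ n) (hk : 1 ≤ k) :
    varDist (P.map (blocks n k l))
        (Measure.pi fun _ : Fin n => P.map (fun ω (i : Fin k) => ω (i : ℤ)))
      ≤ ((n : ℝ) - 1) * betaMix P l :=
  blocking_varDist_le_general P hstat n k l hn
end

section
/- Let θ* be the minimum-distance estimate: any parameter satisfying U_{θ*}(Zⁿ) < inf_θ U_θ(Zⁿ) + 1/n, where U_θ(Zⁿ) = sup_{A ∈ 𝒜_n} |P_θ(A) − P_{Zⁿ}(A)| and 𝒜_n is the Yatracos class of all sets {xⁿ : p_θ(xⁿ) > p_{θ′}(xⁿ)}. Then for the true parameter θ₀, the variational distance satisfies d(P_{θ*}, P_{θ₀}) ≤ 4 U_{θ₀}(Zⁿ) + 3/n. -/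
open MeasureTheory
open scoped ENNReal NNReal

/-- The Yatracos class of a family of densities: all sets `{x : p_θ x > p_θ' x}`,
`θ ≠ θ'`. -/
def yatracos {Λ Xn : Type*} (p : Λ → Xn → ℝ≥0∞) : Set (Set Xn) :=
  {A | ∃ θ θ' : Λ, θ ≠ θ' ∧ A = {x | p θ' x < p θ x}}

/-- Yatracos distance of a candidate `P_θ` to a (e.g. empirical) measure `ν`:
`U_θ = sup_{A ∈ 𝒜} |P_θ(A) − ν(A)|`. -/
noncomputable def yatDev {Λ Xn : Type*} [MeasurableSpace Xn]
    (p : Λ → Xn → ℝ≥0∞) (Pfam : Λ → Measure Xn) (ν : Measure Xn) (θ : Λ) : ℝ :=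
  sSup {r : ℝ | ∃ A ∈ yatracos p, r = |(Pfam θ A).toReal - (ν A).toReal|}

/-!
Let `S = {p θ₀ < p θ*}`. On `S` the measure `P_{θ*}` dominates `P_{θ₀}` and on `Sᶜ` the
reverse holds, so every measurable partition has
`∑ |P_{θ*}(Aᵢ) - P_{θ₀}(Aᵢ)| ≤ 2 (P_{θ*}(S) - P_{θ₀}(S))`. Since `S` lies in the Yatracos
class, comparing both measures with `ν` on `S` bounds this by `2 (U_{θ*} + U_{θ₀})`, and the
near-minimality of `θ*` gives `U_{θ*} < U_{θ₀} + 1/n`.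
-/

namespace MeasureTheory

variable {X : Type*} [MeasurableSpace X]

lemma sum_measureReal_inter_eq_of_iUnion_eq_univ {ι : Type*} [Fintype ι] (P : Measure X)
    [IsFiniteMeasure P] {A : ι → Set X} (hA : ∀ i, MeasurableSet (A i))
    (hdisj : Pairwise (Function.onFun Disjoint A)) (hcov : ⋃ i, A i = Set.univ) {T : Set X}
    (hT : MeasurableSet T) :
    ∑ i, P.real (A i ∩ T) = P.real T := by
  rw [← measureReal_iUnion_fintype (fun i j hij => (hdisj hij).mono Set.inter_subset_left
    Set.inter_subset_left) fun i => (hA i).inter hT, ← Set.iUnion_inter, hcov, Set.univ_inter]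

lemma abs_measureReal_sub_le_of_restrict_le {P Q : Measure X} [IsFiniteMeasure P]
    [IsFiniteMeasure Q] {S : Set X} (hS : MeasurableSet S)
    (hQP : Q.restrict S ≤ P.restrict S) (hPQ : P.restrict Sᶜ ≤ Q.restrict Sᶜ)
    {A : Set X} (hA : MeasurableSet A) :
    |P.real A - Q.real A|
      ≤ (P.real (A ∩ S) - Q.real (A ∩ S)) + (Q.real (A ∩ Sᶜ) - P.real (A ∩ Sᶜ)) := by
  have hQP' : Q.real (A ∩ S) ≤ P.real (A ∩ S) := by
    have := hQP A
    rw [Measure.restrict_apply hA, Measure.restrict_apply hA] at this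
    exact ENNReal.toReal_mono (measure_ne_top P _) this
  have hPQ' : P.real (A ∩ Sᶜ) ≤ Q.real (A ∩ Sᶜ) := by
    have := hPQ A
    rw [Measure.restrict_apply hA, Measure.restrict_apply hA] at this
    exact ENNReal.toReal_mono (measure_ne_top Q _) this
  rw [← measureReal_inter_add_sdiff (μ := P) (s := A) hS,
    ← measureReal_inter_add_sdiff (μ := Q) (s := A) hS, Set.sdiff_eq, abs_le]
  constructor <;> linarith

theorem varDist_le_of_restrict_le {P Q : Measure X} [IsProbabilityMeasure P]
    [IsProbabilityMeasure Q] {S : Set X} (hS : MeasurableSet S)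
    (hQP : Q.restrict S ≤ P.restrict S) (hPQ : P.restrict Sᶜ ≤ Q.restrict Sᶜ) :
    varDist P Q ≤ 2 * (P.real S - Q.real S) := by
  refine csSup_le ⟨_, 1, fun _ => Set.univ, fun _ => MeasurableSet.univ,
    Subsingleton.pairwise, Set.iUnion_const _, rfl⟩ ?_
  rintro _ ⟨m, A, hA, hdisj, hcov, rfl⟩
  change ∑ i, |P.real (A i) - Q.real (A i)| ≤ _
  have hsum := fun (R : Measure X) [IsFiniteMeasure R] (T : Set X) (hT : MeasurableSet T) =>
    sum_measureReal_inter_eq_of_iUnion_eq_univ R hA hdisj hcov hT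
  calc ∑ i, |P.real (A i) - Q.real (A i)|
      ≤ ∑ i, ((P.real (A i ∩ S) - Q.real (A i ∩ S))
          + (Q.real (A i ∩ Sᶜ) - P.real (A i ∩ Sᶜ))) :=
        Finset.sum_le_sum fun i _ => abs_measureReal_sub_le_of_restrict_le hS hQP hPQ (hA i)
    _ = (P.real S - Q.real S) + (Q.real Sᶜ - P.real Sᶜ) := by
        simp only [Finset.sum_add_distrib, Finset.sum_sub_distrib, hsum _ _ hS, hsum _ _ hS.compl]
    _ = 2 * (P.real S - Q.real S) := by
        rw [probReal_compl_eq_one_sub hS, probReal_compl_eq_one_sub hS]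
        ring

theorem varDist_withDensity_le {μ : Measure X} {f g : X → ℝ≥0∞} (hf : Measurable f)
    (hg : Measurable g) [IsProbabilityMeasure (μ.withDensity f)]
    [IsProbabilityMeasure (μ.withDensity g)] :
    varDist (μ.withDensity f) (μ.withDensity g)
      ≤ 2 * ((μ.withDensity f).real {x | g x < f x}
        - (μ.withDensity g).real {x | g x < f x}) := by
  have hS : MeasurableSet {x | g x < f x} := measurableSet_lt hg hf
  refine varDist_le_of_restrict_le hS ?_ ?_ <;>
    simp only [restrict_withDensity hS, restrict_withDensity hS.compl] <;>
    refine withDensity_mono ?_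
  · exact ae_restrict_of_forall_mem hS fun x hx => le_of_lt hx
  · exact ae_restrict_of_forall_mem hS.compl fun x hx => not_lt.mp hx

section Yatracos

variable {Λ : Type*} {p : Λ → X → ℝ≥0∞} {Pfam : Λ → Measure X} {ν : Measure X}

lemma yatDev_nonneg (θ : Λ) : 0 ≤ yatDev p Pfam ν θ :=
  Real.sSup_nonneg (by rintro _ ⟨A, -, rfl⟩; exact abs_nonneg _)

lemma abs_measureReal_sub_le_yatDev {θ : Λ} [IsFiniteMeasure (Pfam θ)] [IsFiniteMeasure ν]
    {A : Set X} (hA : A ∈ yatracos p) :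
    |(Pfam θ).real A - ν.real A| ≤ yatDev p Pfam ν θ := by
  refine le_csSup ⟨(Pfam θ).real Set.univ + ν.real Set.univ, ?_⟩ ⟨A, hA, rfl⟩
  rintro _ ⟨B, -, rfl⟩
  change |(Pfam θ).real B - ν.real B| ≤ _
  have hP := measureReal_mono (μ := Pfam θ) (Set.subset_univ B)
  have hν := measureReal_mono (μ := ν) (Set.subset_univ B)
  exact abs_sub_le_iff.2 ⟨by linarith [measureReal_nonneg (μ := ν) (s := B)],
    by linarith [measureReal_nonneg (μ := Pfam θ) (s := B)]⟩

lemma measureReal_sub_le_yatDev_add (θ θ' : Λ) [IsFiniteMeasure (Pfam θ)]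
    [IsFiniteMeasure (Pfam θ')] [IsFiniteMeasure ν] :
    (Pfam θ).real {x | p θ' x < p θ x} - (Pfam θ').real {x | p θ' x < p θ x}
      ≤ yatDev p Pfam ν θ + yatDev p Pfam ν θ' := by
  obtain rfl | hne := eq_or_ne θ θ'
  · rw [sub_self]
    exact add_nonneg (yatDev_nonneg θ) (yatDev_nonneg θ)
  · have hS : {x | p θ' x < p θ x} ∈ yatracos p := ⟨θ, θ', hne, rfl⟩
    have h := abs_le.1 (abs_measureReal_sub_le_yatDev (Pfam := Pfam) (ν := ν) (θ := θ) hS)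
    have h' := abs_le.1 (abs_measureReal_sub_le_yatDev (Pfam := Pfam) (ν := ν) (θ := θ') hS)
    linarith [h.2, h'.1]

end Yatracos

end MeasureTheory

theorem minimum_distance_estimator_general
    {Λ Xn : Type*} [MeasurableSpace Xn]
    (μ : Measure Xn)
    (p : Λ → Xn → ℝ≥0∞) (hp : ∀ θ, Measurable (p θ))
    (Pfam : Λ → Measure Xn) (hPfam : ∀ θ, Pfam θ = μ.withDensity (p θ))
    (hprob : ∀ θ, IsProbabilityMeasure (Pfam θ))
    (ν : Measure Xn) [IsProbabilityMeasure ν]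
    (n : ℕ)
    (θstar θ₀ : Λ)
    (hstar : yatDev p Pfam ν θstar
      < sInf (Set.range (yatDev p Pfam ν)) + 1 / n) :
    varDist (Pfam θstar) (Pfam θ₀) ≤ 4 * yatDev p Pfam ν θ₀ + 3 / n := by
  have := hprob θstar
  have := hprob θ₀
  have hinf : sInf (Set.range (yatDev p Pfam ν)) ≤ yatDev p Pfam ν θ₀ :=
    csInf_le ⟨0, by rintro _ ⟨θ, rfl⟩; exact yatDev_nonneg θ⟩ ⟨θ₀, rfl⟩
  have hn : (0 : ℝ) ≤ 1 / n := by positivity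
  have h3n : (3 : ℝ) / n = 3 * (1 / n) := by ring
  calc varDist (Pfam θstar) (Pfam θ₀)
      ≤ 2 * ((Pfam θstar).real {x | p θ₀ x < p θstar x}
          - (Pfam θ₀).real {x | p θ₀ x < p θstar x}) := by
        have : IsProbabilityMeasure (μ.withDensity (p θstar)) := hPfam θstar ▸ hprob θstar
        have : IsProbabilityMeasure (μ.withDensity (p θ₀)) := hPfam θ₀ ▸ hprob θ₀
        rw [hPfam θstar, hPfam θ₀]
        exact varDist_withDensity_le (hp θstar) (hp θ₀)
    _ ≤ 2 * (yatDev p Pfam ν θstar + yatDev p Pfam ν θ₀) := by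
        gcongr
        exact measureReal_sub_le_yatDev_add θstar θ₀
    _ ≤ 4 * yatDev p Pfam ν θ₀ + 3 / n := by linarith

/-- Devroye–Lugosi minimum-distance estimation: if `θ*` is any parameter with
`U_{θ*} < inf_θ U_θ + 1/n`, then for the true parameter `θ₀`,
`d(P_{θ*}, P_{θ₀}) ≤ 4 U_{θ₀} + 3/n`. -/
theorem minimum_distance_estimator
    {Λ Xn : Type*} [MeasurableSpace Xn]
    (μ : Measure Xn) [SigmaFinite μ]
    (p : Λ → Xn → ℝ≥0∞) (hp : ∀ θ, Measurable (p θ))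
    (Pfam : Λ → Measure Xn) (hPfam : ∀ θ, Pfam θ = μ.withDensity (p θ))
    (hprob : ∀ θ, IsProbabilityMeasure (Pfam θ))
    (ν : Measure Xn) [IsProbabilityMeasure ν]
    (n : ℕ) (hn : 0 < n)
    (θstar θ₀ : Λ)
    (hstar : yatDev p Pfam ν θstar
      < sInf (Set.range (yatDev p Pfam ν)) + 1 / n) :
    varDist (Pfam θstar) (Pfam θ₀) ≤ 4 * yatDev p Pfam ν θ₀ + 3 / n :=
  minimum_distance_estimator_general μ p hp Pfam hPfam hprob ν n θstar θ₀ hstar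
end

section
/- For Gaussian distributions P = N(m, σ²) and P′ = N(m′, σ′²) on ℝ, the relative entropy D(P‖P′) = (1/2)(ln(σ²/σ′²) + σ′²/σ² + (m−m′)²/σ′² − 1) satisfies D(P‖P′) ≤ (1 + σ′/σ)² ‖θ − θ′‖²/(2σ′²), where θ = (m, σ), θ′ = (m′, σ′) and ‖·‖ is the Euclidean norm on ℝ². -/
/-! With `x = σ²/σ′²`, the bound `ln x ≤ x − 1` turns the divergence into at most
`½((σ/σ′ − σ′/σ)² + (m − m′)²/σ′²)`, and `σ/σ′ − σ′/σ = (1 + σ′/σ)(σ − σ′)/σ′`;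
the mean term only grows when multiplied by `(1 + σ′/σ)² ≥ 1`. -/

lemma div_sub_div_eq_one_add_div_mul_sub_div {a b : ℝ} (ha : a ≠ 0) (hb : b ≠ 0) :
    a / b - b / a = (1 + b / a) * (a - b) / b := by
  field_simp
  ring

lemma log_sq_div_sq_add_sq_div_sq_sub_one_le {a b : ℝ} (ha : 0 < a) (hb : 0 < b) :
    Real.log (a ^ 2 / b ^ 2) + b ^ 2 / a ^ 2 - 1 ≤ (1 + b / a) ^ 2 * (a - b) ^ 2 / b ^ 2 :=
  calc Real.log (a ^ 2 / b ^ 2) + b ^ 2 / a ^ 2 - 1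
      ≤ (a ^ 2 / b ^ 2 - 1) + b ^ 2 / a ^ 2 - 1 := by
        gcongr
        exact Real.log_le_sub_one_of_pos (by positivity)
    _ = (a / b - b / a) ^ 2 := by field_simp; ring
    _ = (1 + b / a) ^ 2 * (a - b) ^ 2 / b ^ 2 := by
        rw [div_sub_div_eq_one_add_div_mul_sub_div ha.ne' hb.ne']
        ring

/-- For Gaussians `N(m,σ²)` and `N(m′,σ′²)`, the relative entropy
`D = ½(ln(σ²/σ′²) + σ′²/σ² + (m−m′)²/σ′² − 1)` satisfies
`D ≤ (1 + σ′/σ)² ‖θ − θ′‖² / (2σ′²)` with `θ = (m,σ)`, `θ′ = (m′,σ′)`. -/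
theorem gaussian_kl_bound
    (m m' σ σ' : ℝ) (hσ : 0 < σ) (hσ' : 0 < σ') :
    (1 / 2) * (Real.log (σ ^ 2 / σ' ^ 2) + σ' ^ 2 / σ ^ 2 + (m - m') ^ 2 / σ' ^ 2 - 1)
      ≤ (1 + σ' / σ) ^ 2 * ((m - m') ^ 2 + (σ - σ') ^ 2) / (2 * σ' ^ 2) := by
  have h_one_le : 1 ≤ (1 + σ' / σ) ^ 2 :=
    one_le_pow₀ (le_add_of_nonneg_right (div_nonneg hσ'.le hσ.le))
  calc (1 / 2) * (Real.log (σ ^ 2 / σ' ^ 2) + σ' ^ 2 / σ ^ 2 + (m - m') ^ 2 / σ' ^ 2 - 1)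
      = (1 / 2) * ((Real.log (σ ^ 2 / σ' ^ 2) + σ' ^ 2 / σ ^ 2 - 1) + (m - m') ^ 2 / σ' ^ 2) := by
        ring
    _ ≤ (1 / 2) * ((1 + σ' / σ) ^ 2 * (σ - σ') ^ 2 / σ' ^ 2
          + (1 + σ' / σ) ^ 2 * ((m - m') ^ 2 / σ' ^ 2)) := by
        gcongr
        · exact log_sq_div_sq_add_sq_div_sq_sub_one_le hσ hσ'
        · exact le_mul_of_one_le_left (by positivity) h_one_le
    _ = (1 + σ' / σ) ^ 2 * ((m - m') ^ 2 + (σ - σ') ^ 2) / (2 * σ' ^ 2) := by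
        ring
end
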